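/- arXiv:1708.00928 — 5 statements merged into one kernel-verified Lean document; each statement's English description precedes it below -/
import Mathlib

section
/- Let n ≥ 4 be an even integer and d ≥ 1 an integer. Then there are no non-trivial primitive integer solutions of 3x² + 2d² = yⁿ; that is, there are no integers x, y with x ≠ 0 and gcd(x,y) = 1 satisfying 3x² + 2d² = yⁿ. -/
/-! Since `n` is even, `yⁿ = z²` with `z = y^(n/2)`. As `2` is not a square modulo `3`, the
congruence `2d² ≡ z² (mod 3)` forces `3 ∣ d` and `3 ∣ z`; then `9 ∣ 3x²`, so `3 ∣ x`, and `3`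
divides both `x` and `y`. -/

theorem ZMod.eq_zero_of_two_mul_sq_eq_sq {a b : ZMod 3} (h : 2 * a ^ 2 = b ^ 2) :
    a = 0 ∧ b = 0 := by
  revert a b
  decide

theorem Int.three_dvd_of_three_mul_sq_add_two_mul_sq_eq_sq {x d z : ℤ}
    (h : 3 * x ^ 2 + 2 * d ^ 2 = z ^ 2) : 3 ∣ x ∧ 3 ∣ z := by
  have hmod : 2 * (d : ZMod 3) ^ 2 = (z : ZMod 3) ^ 2 := by
    have h3 : (3 : ZMod 3) = 0 := rfl
    have hcast := congrArg (Int.cast : ℤ → ZMod 3) h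
    push_cast at hcast
    linear_combination hcast - (x : ZMod 3) ^ 2 * h3
  obtain ⟨hd, hz⟩ := ZMod.eq_zero_of_two_mul_sq_eq_sq hmod
  obtain ⟨b, rfl⟩ := (ZMod.intCast_zmod_eq_zero_iff_dvd d 3).mp hd
  obtain ⟨a, rfl⟩ := (ZMod.intCast_zmod_eq_zero_iff_dvd z 3).mp hz
  have hx : x ^ 2 = 3 * (a ^ 2 - 2 * b ^ 2) := by
    push_cast at h
    exact mul_left_cancel₀ three_ne_zero (by linear_combination h)
  exact ⟨Int.prime_three.dvd_of_dvd_pow (n := 2) ⟨_, hx⟩, ⟨a, rfl⟩⟩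

theorem stmt1_general (n : ℕ) (hneven : Even n) (d : ℤ) :
    ¬ ∃ x y : ℤ, x ≠ 0 ∧ IsCoprime x y ∧ 3 * x ^ 2 + 2 * d ^ 2 = y ^ n := by
  rintro ⟨x, y, -, hcop, heq⟩
  obtain ⟨m, rfl⟩ := hneven
  obtain ⟨h3x, h3ym⟩ := Int.three_dvd_of_three_mul_sq_add_two_mul_sq_eq_sq (z := y ^ m)
    (by rw [heq]; ring)
  exact Int.prime_three.not_isUnit
    (hcop.isUnit_of_dvd' h3x (Int.prime_three.dvd_of_dvd_pow h3ym))

/-- For `n ≥ 4` an even integer and `d ≥ 1`, the equation `3x² + 2d² = yⁿ`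
has no non-trivial primitive integer solutions. -/
theorem stmt1 (n : ℕ) (hn : 4 ≤ n) (hneven : Even n) (d : ℤ) (hd : 1 ≤ d) :
    ¬ ∃ x y : ℤ, x ≠ 0 ∧ IsCoprime x y ∧ 3 * x ^ 2 + 2 * d ^ 2 = y ^ n :=
  stmt1_general n hneven d
end

section
/- Let n be an odd prime, d ≥ 1 an integer, and let (x,y) be a non-trivial primitive solution of 3x² + 2d² = yⁿ (so x ≠ 0 and gcd(x,y) = 1), and suppose u, v are integers with 3^{(n-1)/2} · (3x + d√-6) = (3u + v√-6)ⁿ in ℤ[√-6]. Then: (i) u ≠ 0 and v ≠ 0; (ii) the integers 12u² and 3u² + 2v² are coprime; (iii) for every integer k ≥ 1, (3u + v√-6)ᵏ ≠ (3u - v√-6)ᵏ (equivalently, the quotient (3u+v√-6)/(3u-v√-6) is not a root of unity). -/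
/-!
Write `α = 3u + v√-6` and `n = 2m + 1`, so the hypothesis reads `3^m (3x + d√-6) = αⁿ`.
Taking norms gives `y = 3u² + 2v²`, i.e. `N(α) = 3y`. If `u = 0` (resp. `v = 0`) then `αⁿ` has
vanishing real (resp. imaginary) part, forcing `x = 0` (resp. `d = 0`). A common factor `q` of `3u`
and `v` divides `α`, so `qⁿ ∣ 3^(m+1) x`; with `gcd(x, y) = 1` this gives `3 ∤ y` and
`gcd(u, y) = 1`, while `y` is odd because `2 ∣ y` would force `2 ∣ x`. Finally, let `k` be least
with `αᵏ = ᾱᵏ`. If `k = 2j` then `αʲ = -ᾱʲ`, so `N(αʲ) = 6 (Im αʲ)²` is even, whereas `(3y)ʲ` is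
odd; if `k` is odd then `αᵏ ∈ ℤ`, so `(3y)ᵏ` is a square, contradicting `3 ∤ y`.
-/

theorem Int.sq_ne_mul_pow_of_odd {p : ℕ} [Fact p.Prime] {y : ℤ} (hy : ¬(p : ℤ) ∣ y) {k : ℕ}
    (hk : Odd k) (a : ℤ) : a ^ 2 ≠ (p * y) ^ k := by
  intro h
  have hy0 : y.natAbs ≠ 0 := by rintro hy0; exact hy (by simp [Int.natAbs_eq_zero.mp hy0])
  have hval := congrArg (fun t : ℤ => padicValNat p t.natAbs) h
  simp only [Int.natAbs_pow, Int.natAbs_mul, Int.natAbs_natCast, padicValNat.pow,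
    padicValNat.mul (Fact.out : p.Prime).ne_zero hy0, padicValNat_self,
    padicValNat.eq_zero_of_not_dvd (fun h => hy (Int.natCast_dvd.mpr h))] at hval
  obtain ⟨i, rfl⟩ := hk
  omega

namespace Zsqrtd

variable {d : ℤ}

theorem norm_pow (z : ℤ√d) (k : ℕ) : (z ^ k).norm = z.norm ^ k :=
  map_pow normMonoidHom z k

theorem noZeroDivisors_of_neg (hd : d < 0) : NoZeroDivisors (ℤ√d) where
  eq_zero_or_eq_zero_of_mul_eq_zero {a b} hab := by
    have h := congrArg norm hab
    rwa [norm_mul, norm_zero, mul_eq_zero, norm_eq_zero_iff hd, norm_eq_zero_iff hd] at h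

theorem im_eq_zero_of_star_eq {z : ℤ√d} (h : star z = z) : z.im = 0 := by
  have := congrArg im h
  rw [im_star] at this
  omega

theorem re_eq_zero_of_star_eq_neg {z : ℤ√d} (h : star z = -z) : z.re = 0 := by
  have := congrArg re h
  rw [re_star, re_neg] at this
  omega

theorem im_pow_eq_zero {z : ℤ√d} (hz : z.im = 0) (k : ℕ) : (z ^ k).im = 0 := by
  refine im_eq_zero_of_star_eq ?_
  have hstar : star z = z := Zsqrtd.ext (re_star z) (by rw [im_star, hz, neg_zero])
  rw [star_pow, hstar]

theorem re_pow_eq_zero {z : ℤ√d} (hz : z.re = 0) {k : ℕ} (hk : Odd k) : (z ^ k).re = 0 := by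
  refine re_eq_zero_of_star_eq_neg ?_
  have hstar : star z = -z := Zsqrtd.ext (by rw [re_star, re_neg, hz, neg_zero]) (im_star z)
  rw [star_pow, hstar, hk.neg_pow]

theorem three_mul_add_mul_sqrtd (a b : ℤ) :
    3 * (a : ℤ√d) + (b : ℤ√d) * sqrtd = ⟨3 * a, b⟩ := by
  ext <;> simp

theorem three_mul_sub_mul_sqrtd (a b : ℤ) :
    3 * (a : ℤ√d) - (b : ℤ√d) * sqrtd = star (⟨3 * a, b⟩ : ℤ√d) := by
  ext <;> simp

theorem norm_mk_three_mul (a b : ℤ) :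
    (⟨3 * a, b⟩ : ℤ√(-6)).norm = 3 * (3 * a ^ 2 + 2 * b ^ 2) := by
  rw [norm_def]
  ring

theorem pow_ne_star_pow {y : ℤ} (hy2 : ¬2 ∣ y) (hy3 : ¬3 ∣ y) {z : ℤ√(-6)}
    (hz : z.norm = 3 * y) : ∀ k : ℕ, 1 ≤ k → z ^ k ≠ star z ^ k := by
  have := noZeroDivisors_of_neg (d := -6) (by norm_num)
  intro k
  induction k using Nat.strong_induction_on with
  | _ k ih =>
  intro hk hzk
  rcases Nat.even_or_odd' k with ⟨j, rfl | rfl⟩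
  · have hsq : (z ^ j) ^ 2 = (star z ^ j) ^ 2 := by rwa [← pow_mul, ← pow_mul, mul_comm]
    rcases sq_eq_sq_iff_eq_or_eq_neg.mp hsq with h | h
    · exact ih j (by omega) (by omega) h
    · have hre : (z ^ j).re = 0 := re_eq_zero_of_star_eq_neg (by rw [star_pow, h, neg_neg])
      have h2 : (2 : ℤ) ∣ (3 * y) ^ j := by
        rw [← hz, ← norm_pow, norm_def, hre]
        exact ⟨3 * (z ^ j).im * (z ^ j).im, by ring⟩
      exact hy2 ((Int.prime_two.dvd_or_dvd (Int.prime_two.dvd_of_dvd_pow h2)).resolve_left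
        (by norm_num))
  · have him : (z ^ (2 * j + 1)).im = 0 := im_eq_zero_of_star_eq (by rw [star_pow, hzk])
    refine Int.sq_ne_mul_pow_of_odd (p := 3) hy3 ⟨j, rfl⟩ (z ^ (2 * j + 1)).re ?_
    rw [Nat.cast_ofNat, ← hz, ← norm_pow, norm_def, him]
    ring

end Zsqrtd

open Zsqrtd

theorem isCoprime_two_of_three_sq_add_two_sq_eq_pow {n : ℕ} {x d y : ℤ} (hxy : IsCoprime x y)
    (hn : n ≠ 0) (h : 3 * x ^ 2 + 2 * d ^ 2 = y ^ n) : IsCoprime 2 y := by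
  rw [Int.prime_two.coprime_iff_not_dvd]
  intro h2y
  have h2 : (2 : ℤ) ∣ 3 * x ^ 2 := by
    rw [← dvd_add_left (dvd_mul_right 2 (d ^ 2)), h]
    exact dvd_pow h2y hn
  have h2x := Int.prime_two.dvd_of_dvd_pow
    ((Int.prime_two.dvd_or_dvd h2).resolve_left (by norm_num))
  exact Int.prime_two.not_isUnit (hxy.isUnit_of_dvd' h2x h2y)

section

variable {m : ℕ} {x d u v y : ℤ}

theorem three_sq_add_two_sq_eq_pow_of_eq
    (huv : ((3 ^ m : ℤ) : ℤ√(-6)) * ⟨3 * x, d⟩ = ⟨3 * u, v⟩ ^ (2 * m + 1)) :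
    3 * x ^ 2 + 2 * d ^ 2 = (3 * u ^ 2 + 2 * v ^ 2) ^ (2 * m + 1) := by
  have h := congrArg norm huv
  rw [norm_mul, norm_intCast, norm_pow, norm_mk_three_mul, norm_mk_three_mul, mul_pow] at h
  refine mul_left_cancel₀ (pow_ne_zero (2 * m + 1) (three_ne_zero (α := ℤ))) ?_
  linear_combination h

theorem ne_zero_of_eq_pow_of_ne_zero_left
    (huv : ((3 ^ m : ℤ) : ℤ√(-6)) * ⟨3 * x, d⟩ = ⟨3 * u, v⟩ ^ (2 * m + 1)) (hx : x ≠ 0) :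
    u ≠ 0 := by
  rintro rfl
  have h := congrArg re huv
  rw [re_smul, re_pow_eq_zero (by simp) (odd_two_mul_add_one m)] at h
  simp_all

theorem ne_zero_of_eq_pow_of_ne_zero_right
    (huv : ((3 ^ m : ℤ) : ℤ√(-6)) * ⟨3 * x, d⟩ = ⟨3 * u, v⟩ ^ (2 * m + 1)) (hd : d ≠ 0) :
    v ≠ 0 := by
  rintro rfl
  have h := congrArg im huv
  rw [im_smul, im_pow_eq_zero rfl] at h
  simp_all

theorem pow_dvd_of_dvd_of_eq_pow
    (huv : ((3 ^ m : ℤ) : ℤ√(-6)) * ⟨3 * x, d⟩ = ⟨3 * u, v⟩ ^ (2 * m + 1)) {q : ℤ}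
    (hu : q ∣ 3 * u) (hv : q ∣ v) : q ^ (2 * m + 1) ∣ 3 ^ (m + 1) * x := by
  have hq : (q : ℤ√(-6)) ∣ ⟨3 * u, v⟩ := (intCast_dvd _ _).mpr ⟨hu, hv⟩
  have hqn := pow_dvd_pow_of_dvd hq (2 * m + 1)
  rw [← huv, ← Int.cast_pow, intCast_dvd, re_smul] at hqn
  rw [pow_succ (3 : ℤ) m, mul_assoc]
  exact hqn.1

theorem isCoprime_three_of_eq_pow
    (huv : ((3 ^ m : ℤ) : ℤ√(-6)) * ⟨3 * x, d⟩ = ⟨3 * u, v⟩ ^ (2 * m + 1)) (hm : m ≠ 0)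
    (hxy : IsCoprime x y) (hy : y = 3 * u ^ 2 + 2 * v ^ 2) : IsCoprime 3 y := by
  rw [Int.prime_three.coprime_iff_not_dvd]
  intro h3y
  have h3v : (3 : ℤ) ∣ v := by
    rw [hy, dvd_add_right (dvd_mul_right 3 _)] at h3y
    exact Int.prime_three.dvd_of_dvd_pow
      ((Int.prime_three.dvd_or_dvd h3y).resolve_left (by norm_num))
  have h3x : (3 : ℤ) ∣ x := by
    have := (pow_dvd_pow 3 (by omega : m + 2 ≤ 2 * m + 1)).trans
      (pow_dvd_of_dvd_of_eq_pow huv (dvd_mul_right 3 u) h3v)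
    rwa [pow_succ _ (m + 1), mul_dvd_mul_iff_left (pow_ne_zero _ three_ne_zero)] at this
  exact Int.prime_three.not_isUnit (hxy.isUnit_of_dvd' h3x h3y)

theorem isCoprime_of_eq_pow
    (huv : ((3 ^ m : ℤ) : ℤ√(-6)) * ⟨3 * x, d⟩ = ⟨3 * u, v⟩ ^ (2 * m + 1))
    (hxy : IsCoprime x y) (hy : y = 3 * u ^ 2 + 2 * v ^ 2) (h2 : IsCoprime 2 y)
    (h3 : IsCoprime 3 y) : IsCoprime u y := by
  refine isCoprime_of_prime_dvd (fun ⟨_, hy0⟩ => ?_) fun p hp hpu hpy => ?_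
  · exact Int.prime_two.not_isUnit (isCoprime_zero_right.mp (hy0 ▸ h2))
  have hpv : p ∣ 2 * v ^ 2 := by
    rwa [hy, dvd_add_right (dvd_mul_of_dvd_right (dvd_pow hpu two_ne_zero) 3)] at hpy
  rcases hp.dvd_or_dvd hpv with hp2 | hpv
  · exact hp.not_isUnit (h2.isUnit_of_dvd' hp2 hpy)
  have hpx := (dvd_pow_self p (by omega)).trans
    (pow_dvd_of_dvd_of_eq_pow huv (dvd_mul_of_dvd_right hpu 3) (hp.dvd_of_dvd_pow hpv))
  rcases hp.dvd_or_dvd hpx with hp3 | hpx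
  · exact hp.not_isUnit (h3.isUnit_of_dvd' (hp.dvd_of_dvd_pow hp3) hpy)
  · exact hp.not_isUnit (hxy.isUnit_of_dvd' hpx hpy)

end

/-- Suppose `n` is an odd prime, `d ≥ 1`, `(x,y)` is a non-trivial primitive
solution of `3x² + 2d² = yⁿ`, and `u, v` are integers with
`3^((n-1)/2) · (3x + d√-6) = (3u + v√-6)ⁿ` in `ℤ[√-6]`. Then `u ≠ 0`, `v ≠ 0`,
the integers `12u²` and `3u² + 2v²` are coprime, and
`(3u + v√-6)ᵏ ≠ (3u - v√-6)ᵏ` for all `k ≥ 1`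
(i.e. `(3u+v√-6)/(3u-v√-6)` is not a root of unity):
the pair `((3u+v√-6)/√3, (3u-v√-6)/√3)` is a Lehmer pair. -/
theorem stmt5 (n : ℕ) (hn : n.Prime) (hnodd : Odd n) (d : ℤ) (hd : 1 ≤ d)
    (x y : ℤ) (hx : x ≠ 0) (hxy : IsCoprime x y)
    (h : 3 * x ^ 2 + 2 * d ^ 2 = y ^ n) (u v : ℤ)
    (huv : (3 : Zsqrtd (-6)) ^ ((n - 1) / 2) *
          (3 * (x : Zsqrtd (-6)) + (d : Zsqrtd (-6)) * Zsqrtd.sqrtd) =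
        (3 * (u : Zsqrtd (-6)) + (v : Zsqrtd (-6)) * Zsqrtd.sqrtd) ^ n) :
    u ≠ 0 ∧ v ≠ 0 ∧ IsCoprime (12 * u ^ 2) (3 * u ^ 2 + 2 * v ^ 2) ∧
      ∀ k : ℕ, 1 ≤ k →
        (3 * (u : Zsqrtd (-6)) + (v : Zsqrtd (-6)) * Zsqrtd.sqrtd) ^ k ≠
          (3 * (u : Zsqrtd (-6)) - (v : Zsqrtd (-6)) * Zsqrtd.sqrtd) ^ k := by
  obtain ⟨m, rfl⟩ := hnodd
  have hm : m ≠ 0 := by rintro rfl; exact Nat.not_prime_one hn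
  replace huv : ((3 ^ m : ℤ) : ℤ√(-6)) * ⟨3 * x, d⟩ = ⟨3 * u, v⟩ ^ (2 * m + 1) := by
    rw [Int.cast_pow, Int.cast_ofNat, ← three_mul_add_mul_sqrtd, ← three_mul_add_mul_sqrtd]
    rwa [Nat.add_sub_cancel, Nat.mul_div_cancel_left m two_pos] at huv
  have hy : y = 3 * u ^ 2 + 2 * v ^ 2 :=
    (Odd.pow_inj ⟨m, rfl⟩).mp (h.symm.trans (three_sq_add_two_sq_eq_pow_of_eq huv))
  have h2 := isCoprime_two_of_three_sq_add_two_sq_eq_pow hxy (by omega) h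
  have h3 := isCoprime_three_of_eq_pow huv hm hxy hy
  refine ⟨ne_zero_of_eq_pow_of_ne_zero_left huv hx, ne_zero_of_eq_pow_of_ne_zero_right huv
    (by omega), ?_, ?_⟩
  · rw [← hy, show (12 : ℤ) * u ^ 2 = 2 ^ 2 * 3 * u ^ 2 by ring]
    exact (h2.pow_left.mul_left h3).mul_left (isCoprime_of_eq_pow huv hxy hy h2 h3).pow_left
  · rw [three_mul_add_mul_sqrtd, three_mul_sub_mul_sqrtd]
    exact pow_ne_star_pow (Int.prime_two.coprime_iff_not_dvd.mp h2)
      (Int.prime_three.coprime_iff_not_dvd.mp h3) (by rw [norm_mk_three_mul, hy])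
end

section
/- Let n ≥ 3 be an odd integer, d ≥ 1 an integer, and suppose x, u, v are integers satisfying 3^{(n-1)/2} · (3x + d√-6) = (3u + v√-6)ⁿ in ℤ[√-6]. Then d = v · f_n(u,v); in particular v divides d. -/
/-!
Write `n = 2m + 1` and compare `√-6`-coefficients. By the binomial theorem the coefficient of
`√-6` in `(3u + v√-6)ⁿ` is `v · Σᵢ C(n, 2i+1) (3u)^(2(m-i)) (-6v²)^i`, and the `i`-th summand
is `3^m` times the `i`-th summand of `v · f_n(u, v)`, since
`3^(2(m-i)) · 3^i = 3^m · 3^(m-i)`.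
The left-hand side has coefficient `3^m d`, so cancelling `3^m` gives `d = v · f_n(u, v)`.
-/

/-- The polynomial `f_n(X,Y) = Σ_{i=0}^{(n-1)/2} C(n,2i+1)·(-2)^i·3^((n-1)/2-i)·X^(n-1-2i)·Y^(2i)`
evaluated at integers. -/
def fpoly (n : ℕ) (x y : ℤ) : ℤ :=
  ∑ i ∈ Finset.range ((n - 1) / 2 + 1),
    (n.choose (2 * i + 1) : ℤ) * (-2) ^ i * 3 ^ ((n - 1) / 2 - i) *
      x ^ (n - 1 - 2 * i) * y ^ (2 * i)

open Finset

theorem Finset.sum_range_two_mul {M : Type*} [AddCommMonoid M] (g : ℕ → M) (m : ℕ) :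
    ∑ k ∈ range (2 * m), g k = ∑ i ∈ range m, (g (2 * i) + g (2 * i + 1)) := by
  induction m with
  | zero => simp
  | succ m ih => rw [mul_add, sum_range_succ, sum_range_succ, sum_range_succ, ih, add_assoc]

theorem add_pow_two_mul_add_one {R : Type*} [CommSemiring R] (x y : R) (m : ℕ) :
    (x + y) ^ (2 * m + 1) =
      ∑ i ∈ range (m + 1),
          ((2 * m + 1).choose (2 * i) : R) * x ^ (2 * (m - i) + 1) * (y ^ 2) ^ i +
        y * ∑ i ∈ range (m + 1),
          ((2 * m + 1).choose (2 * i + 1) : R) * x ^ (2 * (m - i)) * (y ^ 2) ^ i := by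
  rw [add_comm x y, add_pow, show 2 * m + 1 + 1 = 2 * (m + 1) by ring, sum_range_two_mul,
    sum_add_distrib, mul_sum]
  congr 1 <;> refine sum_congr rfl fun i hi => ?_ <;>
    have hi : i ≤ m := mem_range_succ_iff.mp hi
  · rw [show 2 * m + 1 - 2 * i = 2 * (m - i) + 1 by omega, pow_mul]
    ring
  · rw [show 2 * m + 1 - (2 * i + 1) = 2 * (m - i) by omega, pow_succ, pow_mul]
    ring

theorem Zsqrtd.im_pow_two_mul_add_one {d : ℤ} (a b : ℤ) (m : ℕ) :
    (((a : ℤ√d) + (b : ℤ√d) * sqrtd) ^ (2 * m + 1)).im =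
      b * ∑ i ∈ range (m + 1),
        ((2 * m + 1).choose (2 * i + 1) : ℤ) * a ^ (2 * (m - i)) * (d * b ^ 2) ^ i := by
  have hsq : ((b : ℤ√d) * sqrtd) ^ 2 = ((d * b ^ 2 : ℤ) : ℤ√d) := by
    rw [mul_pow, sq sqrtd, dmuld]; push_cast; ring
  rw [add_pow_two_mul_add_one, hsq]
  simp only [← Int.cast_natCast (R := ℤ√d), ← Int.cast_pow, ← Int.cast_mul,
    ← Int.cast_sum]
  simp only [im_add, im_mul, re_mul, im_intCast, re_intCast, im_sqrtd, re_sqrtd]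
  ring

theorem three_pow_mul_fpoly_two_mul_add_one (m : ℕ) (u v : ℤ) :
    3 ^ m * fpoly (2 * m + 1) u v =
      ∑ i ∈ range (m + 1),
        ((2 * m + 1).choose (2 * i + 1) : ℤ) * (3 * u) ^ (2 * (m - i)) * (-6 * v ^ 2) ^ i := by
  rw [fpoly, show (2 * m + 1 - 1) / 2 = m by omega, mul_sum]
  refine sum_congr rfl fun i hi => ?_
  obtain ⟨j, rfl⟩ := Nat.exists_eq_add_of_le (mem_range_succ_iff.mp hi)
  rw [show 2 * (i + j) + 1 - 1 - 2 * i = 2 * j by omega, show i + j - i = j by omega,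
    show (-6 * v ^ 2) ^ i = (-2) ^ i * 3 ^ i * (v ^ 2) ^ i by
      rw [← mul_pow, ← mul_pow]; norm_num]
  ring

theorem stmt7_general (n : ℕ) (hnodd : Odd n) (d : ℤ)
    (x u v : ℤ)
    (h : (3 : Zsqrtd (-6)) ^ ((n - 1) / 2) *
          (3 * (x : Zsqrtd (-6)) + (d : Zsqrtd (-6)) * Zsqrtd.sqrtd) =
        (3 * (u : Zsqrtd (-6)) + (v : Zsqrtd (-6)) * Zsqrtd.sqrtd) ^ n) :
    d = v * fpoly n u v ∧ v ∣ d := by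
  obtain ⟨m, rfl⟩ := hnodd
  have him := congrArg Zsqrtd.im h
  rw [show (3 : ℤ√(-6)) * u = ((3 * u : ℤ) : ℤ√(-6)) by push_cast; rfl,
    Zsqrtd.im_pow_two_mul_add_one, ← three_pow_mul_fpoly_two_mul_add_one,
    show (2 * m + 1 - 1) / 2 = m by omega,
    show (3 : ℤ√(-6)) ^ m = ((3 ^ m : ℤ) : ℤ√(-6)) by push_cast; rfl,
    Zsqrtd.im_smul] at him
  have hd : d = v * fpoly (2 * m + 1) u v :=
    mul_left_cancel₀ (pow_ne_zero m (by norm_num : (3 : ℤ) ≠ 0)) <| by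
      simpa [Zsqrtd.im_mul, mul_left_comm] using him
  exact ⟨hd, Dvd.intro _ hd.symm⟩

/-- If `n ≥ 3` is odd, `d ≥ 1`, and the integers `x, u, v` satisfy
`3^((n-1)/2) · (3x + d√-6) = (3u + v√-6)ⁿ` in `ℤ[√-6]`, then
`d = v · f_n(u,v)`; in particular `v ∣ d`. -/
theorem stmt7 (n : ℕ) (hn : 3 ≤ n) (hnodd : Odd n) (d : ℤ) (hd : 1 ≤ d)
    (x u v : ℤ)
    (h : (3 : Zsqrtd (-6)) ^ ((n - 1) / 2) *
          (3 * (x : Zsqrtd (-6)) + (d : Zsqrtd (-6)) * Zsqrtd.sqrtd) =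
        (3 * (u : Zsqrtd (-6)) + (v : Zsqrtd (-6)) * Zsqrtd.sqrtd) ^ n) :
    d = v * fpoly n u v ∧ v ∣ d :=
  stmt7_general n hnodd d x u v h
end

section
/- Let n be an odd prime, let p > 3 be a prime, let b ≥ 2 and 1 ≤ t ≤ b-1 be integers, and let u be an integer with p ∤ u. If p^t · f_n(u, p^t) = p^b, then n = p and t = b - 1 (so that f_p(u, p^{b-1}) = p). -/
/-!
Modulo `y²` only the `i = 0` term of `f_n(x, y)` survives, so `f_n(u, pᵗ) ≡ n·3ᵏ·u^(n-1)`
modulo `p²`, where `k = (n-1)/2`. The hypothesis gives `f_n(u, pᵗ) = p^(b-t)` with `b - t ≥ 1`,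
so `p` divides `n·3ᵏ·u^(n-1)`; as `p ∤ 3u`, this forces `p ∣ n`, i.e. `n = p`. Then
`p^(b-t) ≡ p·(3ᵏ·u^(n-1))` modulo `p²` with the cofactor prime to `p`, which pins `b - t = 1`.
-/

theorem fpoly_modEq (n : ℕ) (x y : ℤ) :
    fpoly n x y ≡ n * 3 ^ ((n - 1) / 2) * x ^ (n - 1) [ZMOD y ^ 2] := by
  refine (Int.modEq_iff_dvd.2 ?_).symm
  rw [fpoly, Finset.sum_range_succ']
  simp only [mul_zero, pow_zero, mul_one, Nat.choose_one_right, Nat.sub_zero, zero_add,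
    add_sub_cancel_right]
  exact Finset.dvd_sum fun i _ => Dvd.dvd.mul_left (pow_dvd_pow y (by omega)) _

theorem Int.not_dvd_three_pow_mul_pow {p : ℕ} (hp : p.Prime) (hp3 : 3 < p) {u : ℤ}
    (hu : ¬ (p : ℤ) ∣ u) (k j : ℕ) : ¬ (p : ℤ) ∣ 3 ^ k * u ^ j := by
  have hpz : Prime (p : ℤ) := Nat.prime_iff_prime_int.1 hp
  have hp3' : ¬ (p : ℤ) ∣ 3 := fun hd => by
    have := Nat.le_of_dvd (by norm_num) (by exact_mod_cast hd : p ∣ 3)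
    omega
  rw [hpz.dvd_mul, not_or]
  exact ⟨fun hd => hp3' (hpz.dvd_of_dvd_pow hd), fun hd => hu (hpz.dvd_of_dvd_pow hd)⟩

theorem Prime.eq_one_of_pow_modEq_mul {p w : ℤ} (hp : Prime p) (hw : ¬ p ∣ w) {m : ℕ}
    (h : p ^ m ≡ p * w [ZMOD p ^ 2]) : m = 1 := by
  rcases m with _ | _ | m
  · have hd : p ∣ 1 := by
      have := (h.of_dvd (dvd_pow_self p two_ne_zero)).dvd_iff.2 (dvd_mul_right p w)
      simpa using this
    exact absurd (isUnit_of_dvd_one hd) hp.not_isUnit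
  · rfl
  · have hd : p ^ 2 ∣ p * w := h.dvd_iff.1 (pow_dvd_pow p (by omega))
    rw [pow_two] at hd
    exact absurd ((mul_dvd_mul_iff_left hp.ne_zero).1 hd) hw

theorem stmt11_general (n p : ℕ) (hn : n.Prime) (hp : p.Prime)
    (hp3 : 3 < p) (b t : ℕ) (ht1 : 1 ≤ t) (ht2 : t ≤ b - 1)
    (u : ℤ) (hu : ¬ (p : ℤ) ∣ u)
    (h : (p : ℤ) ^ t * fpoly n u ((p : ℤ) ^ t) = (p : ℤ) ^ b) :
    n = p ∧ t = b - 1 := by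
  have hpz : Prime (p : ℤ) := Nat.prime_iff_prime_int.1 hp
  have hf : fpoly n u ((p : ℤ) ^ t) = (p : ℤ) ^ (b - t) := by
    apply mul_left_cancel₀ (pow_ne_zero t hpz.ne_zero)
    rw [h, ← pow_add]
    congr 1
    omega
  have hmod : (p : ℤ) ^ (b - t) ≡ n * 3 ^ ((n - 1) / 2) * u ^ (n - 1) [ZMOD (p : ℤ) ^ 2] := by
    rw [← hf]
    exact (fpoly_modEq n u _).of_dvd (by rw [← pow_mul]; exact pow_dvd_pow _ (by omega))
  have hcofactor := Int.not_dvd_three_pow_mul_pow hp hp3 hu ((n - 1) / 2) (n - 1)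
  have hpn : (p : ℤ) ∣ n := by
    have hpc := (hmod.of_dvd (dvd_pow_self _ two_ne_zero)).dvd_iff.1 (dvd_pow_self _ (by omega))
    rw [mul_assoc, hpz.dvd_mul] at hpc
    exact hpc.resolve_right hcofactor
  have hnp : n = p :=
    ((Nat.prime_dvd_prime_iff_eq hp hn).1 (by exact_mod_cast hpn)).symm
  subst hnp
  rw [mul_assoc] at hmod
  have := hpz.eq_one_of_pow_modEq_mul hcofactor hmod
  exact ⟨rfl, by omega⟩

/-- If `n` is an odd prime, `p > 3` is prime, `b ≥ 2`, `1 ≤ t ≤ b - 1`,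
`p ∤ u`, and `p^t · f_n(u, p^t) = p^b`, then `n = p` and `t = b - 1` (so
`f_p(u, p^(b-1)) = p`). -/
theorem stmt11 (n p : ℕ) (hn : n.Prime) (hnodd : Odd n) (hp : p.Prime)
    (hp3 : 3 < p) (b t : ℕ) (hb : 2 ≤ b) (ht1 : 1 ≤ t) (ht2 : t ≤ b - 1)
    (u : ℤ) (hu : ¬ (p : ℤ) ∣ u)
    (h : (p : ℤ) ^ t * fpoly n u ((p : ℤ) ^ t) = (p : ℤ) ^ b) :
    n = p ∧ t = b - 1 :=
  stmt11_general n p hn hp hp3 b t ht1 ht2 u hu h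
end

section
/- Let p > 3 be a prime. Then there exists an integer u₀ ≥ 0 such that for every integer b ≥ 2 and every integer u with |u| ≥ u₀, one has f_p(u, p^{b-1}) ≠ p. (In fact f_p(u, p^{b-1}) > p for all such u.) -/
theorem Nat.Prime.pow_succ_dvd_pow_mul_of_dvd_mul {q j k x n : ℕ} (hq : q.Prime)
    (hdvd : q ^ j ∣ x * n) (hn : 0 < n) (hnk : n < q ^ k) : q ^ (j + 1) ∣ q ^ k * x := by
  have := Fact.mk hq
  rcases eq_or_ne x 0 with rfl | hx
  · simp
  have hvn : padicValNat q n < k :=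
    (Nat.pow_lt_pow_iff_right hq.one_lt).1 ((Nat.le_of_dvd hn pow_padicValNat_dvd).trans_lt hnk)
  rw [padicValNat_dvd_iff_le (mul_ne_zero hx hn.ne'), padicValNat.mul hx hn.ne'] at hdvd
  rw [padicValNat_dvd_iff_le (mul_ne_zero (pow_ne_zero _ hq.ne_zero) hx),
    padicValNat.mul (pow_ne_zero _ hq.ne_zero) hx, padicValNat.prime_pow]
  omega

theorem Nat.two_mul_sq_lt_three_pow (k : ℕ) : 2 * k ^ 2 < 3 ^ k := by
  induction k with
  | zero => simp
  | succ k ih => rw [pow_succ 3 k]; nlinarith [Nat.le_mul_self k]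

theorem Nat.choose_two_mul_two_lt_three_pow (k : ℕ) : (2 * k).choose 2 < 3 ^ k := by
  refine lt_of_le_of_lt ?_ (Nat.two_mul_sq_lt_three_pow k)
  rw [Nat.choose_two_right]
  refine Nat.div_le_of_le_mul ?_
  calc 2 * k * (2 * k - 1) ≤ 2 * k * (2 * k) := Nat.mul_le_mul_left _ (Nat.sub_le _ _)
    _ = 2 * (2 * k ^ 2) := by ring

theorem three_pow_succ_dvd_three_pow_mul_choose {j m k : ℕ} (hj : 3 ^ j ∣ m) (hk : 1 ≤ k) :
    3 ^ (j + 1) ∣ 3 ^ k * (2 * m + 1).choose (2 * k) := by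
  have hm : m ∣ (2 * m + 1).choose 2 :=
    ⟨2 * m + 1, by rw [Nat.choose_two_right, Nat.add_sub_cancel, mul_left_comm,
      Nat.mul_div_cancel_left _ two_pos, mul_comm]⟩
  refine Nat.prime_three.pow_succ_dvd_pow_mul_of_dvd_mul ?_ (Nat.choose_pos (by omega))
    (Nat.choose_two_mul_two_lt_three_pow k)
  rw [Nat.choose_mul (by omega)]
  exact (hj.trans hm).mul_right _

open Finset

theorem fpoly_two_mul_add_one (m : ℕ) (x y : ℤ) :
    fpoly (2 * m + 1) x y = ∑ k ∈ range (m + 1),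
      ((2 * m + 1).choose (2 * k) : ℤ) * 3 ^ k * x ^ (2 * k) * (-2 * y ^ 2) ^ (m - k) := by
  rw [fpoly, ← sum_range_reflect]
  refine sum_congr (by simp) fun k hk => ?_
  have hk : k ≤ m := Nat.lt_succ_iff.1 (mem_range.1 hk)
  have hsymm : (2 * m + 1).choose (2 * (m - k) + 1) = (2 * m + 1).choose (2 * k) := by
    rw [← Nat.choose_symm (by omega)]
    congr 1
    omega
  simp only [Nat.add_sub_cancel, Nat.mul_div_cancel_left _ two_pos]
  rw [hsymm, show m - (m - k) = k by omega, show 2 * m - 2 * (m - k) = 2 * k by omega, mul_pow,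
    ← pow_mul]
  ring

theorem Int.three_dvd_neg_two_mul_sq_sub_one {y : ℤ} (hy : ¬ 3 ∣ y) : 3 ∣ -2 * y ^ 2 - 1 := by
  have hy' : (y : ZMod 3) ≠ 0 := by rwa [Ne, ZMod.intCast_zmod_eq_zero_iff_dvd]
  have h : ((-2 * y ^ 2 - 1 : ℤ) : ZMod 3) = 0 := by
    push_cast
    generalize (y : ZMod 3) = t at hy'
    revert t
    decide
  exact_mod_cast (ZMod.intCast_zmod_eq_zero_iff_dvd _ 3).1 h

theorem three_pow_succ_dvd_fpoly_sub_one {j m : ℕ} (hj : 3 ^ j ∣ m) (x : ℤ) {y : ℤ}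
    (hy : ¬ 3 ∣ y) : (3 : ℤ) ^ (j + 1) ∣ fpoly (2 * m + 1) x y - 1 := by
  rw [fpoly_two_mul_add_one, sum_range_succ', add_sub_assoc]
  refine dvd_add (dvd_sum fun k _ => ?_) ?_
  · have h := Int.natCast_dvd_natCast.2
      (three_pow_succ_dvd_three_pow_mul_choose hj (Nat.le_add_left 1 k))
    push_cast at h
    exact h.trans (Dvd.intro (x ^ (2 * (k + 1)) * (-2 * y ^ 2) ^ (m - (k + 1))) (by ring))
  · obtain ⟨t, rfl⟩ := hj
    have h := dvd_sub_pow_of_dvd_sub (p := 3) (a := -2 * y ^ 2) (b := 1)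
      (by exact_mod_cast Int.three_dvd_neg_two_mul_sq_sub_one hy) j
    simp only [Nat.choose_zero_right, Nat.cast_one, mul_zero, pow_zero, one_mul, mul_one,
      Nat.sub_zero, pow_mul, one_pow] at h ⊢
    exact_mod_cast h.trans (sub_one_dvd_pow_sub_one _ t)

theorem fpoly_two_mul_add_one_ne {m : ℕ} (hm : m ≠ 0) (x : ℤ) {y : ℤ} (hy : ¬ 3 ∣ y) :
    fpoly (2 * m + 1) x y ≠ ((2 * m + 1 : ℕ) : ℤ) := by
  intro h
  have h3 := three_pow_succ_dvd_fpoly_sub_one (Nat.ordProj_dvd m 3) x hy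
  rw [h, Nat.cast_add_one, add_sub_cancel_right] at h3
  have h3' : 3 ^ (m.factorization 3 + 1) ∣ 2 * m := by exact_mod_cast h3
  exact Nat.pow_succ_factorization_not_dvd hm Nat.prime_three
    ((Nat.Coprime.pow_left _ (by norm_num)).dvd_of_dvd_mul_left h3')

/-- For every prime `p > 3` there is a constant `u₀ ≥ 0` such that for all
`b ≥ 2` and all integers `u` with `|u| ≥ u₀` one has `f_p(u, p^(b-1)) ≠ p`
(in fact `f_p(u, p^(b-1)) > p`). -/
theorem stmt13 (p : ℕ) (hp : p.Prime) (hp3 : 3 < p) :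
    ∃ u₀ : ℤ, 0 ≤ u₀ ∧ ∀ b : ℕ, 2 ≤ b → ∀ u : ℤ, u₀ ≤ |u| →
      fpoly p u ((p : ℤ) ^ (b - 1)) ≠ p := by
  obtain ⟨m, rfl⟩ := hp.odd_of_ne_two (by omega)
  refine ⟨0, le_rfl, fun b _ u _ => fpoly_two_mul_add_one_ne (by omega) u fun h => ?_⟩
  have h3 : 3 ∣ 2 * m + 1 := Int.natCast_dvd_natCast.1 (Int.Prime.dvd_pow' Nat.prime_three h)
  have := (Nat.prime_dvd_prime_iff_eq Nat.prime_three hp).1 h3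
  omega
end
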